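/- For each non-negative integer n, define P(n) as the terminating hypergeometric sum P(n) = (1/2)·₃F₂(−n/2, −(n+1)/2, b; −n, a/2; 1), interpreted as the sum over 0 ≤ k ≤ ⌈n/2⌉ of p(n,k) where p(n,k) = ((−1)^k / (2·4^k)) · (n+1)·(n−k)! / ((n−2k+1)!·k!) · (b)_k/((a/2)_k). Then for all integers n ≥ 1, P(n) satisfies the recurrence 2(n+a)·P(n+1) − (3n+2a)·P(n) + (n+b)·P(n−1) = 0, provided a and b are such that no denominator vanishes. -/

import Mathlib

open Complex Finset

/-- Pochhammer symbol (rising factorial) `(x)_k`. -/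
noncomputable def poch (x : ℂ) (k : ℕ) : ℂ := ∏ i ∈ Finset.range k, (x + i)

/-- The `k`-th summand `p(n,k)` of the terminating sum
`P(n) = (1/2)·₃F₂(−n/2, −(n+1)/2, b; −n, a/2; 1)`; zero for `k > ⌈n/2⌉`. -/
noncomputable def pTerm (a b : ℂ) (n k : ℕ) : ℂ :=
  if k ≤ (n + 1) / 2 then
    (-1 : ℂ) ^ k / (2 * 4 ^ k) *
      ((n + 1 : ℂ) * (Nat.factorial (n - k))) /
        ((Nat.factorial (n - 2 * k + 1)) * (Nat.factorial k)) *
      (poch b k / poch (a / 2) k)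
  else 0

/-- `P(n)`, a finite sum with `⌈n/2⌉ + 1` terms. -/
noncomputable def Pfun (a b : ℂ) (n : ℕ) : ℂ :=
  ∑ k ∈ Finset.range ((n + 1) / 2 + 1), pTerm a b n k

lemma poch_succ (x : ℂ) (k : ℕ) : poch x (k + 1) = poch x k * (x + k) :=
  Finset.prod_range_succ _ _

/-- The Gosper certificate term. -/
noncomputable def gFun (a b : ℂ) (n j : ℕ) : ℂ :=
  if 2 * j ≤ n then
    -(n : ℂ) * ((-1 : ℂ) ^ j / (2 * 4 ^ j)) *
      (Nat.factorial (n - 1 - j)) /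
        ((Nat.factorial (n - 2 * j)) * (Nat.factorial j)) *
      (poch b (j + 1) / poch (a / 2) j)
  else 0

noncomputable def GG (a b : ℂ) (n : ℕ) : ℕ → ℂ
  | 0 => 0
  | (j + 1) => gFun a b n j

lemma fact_ne (t : ℕ) : ((Nat.factorial t : ℂ)) ≠ 0 :=
  Nat.cast_ne_zero.2 (Nat.factorial_ne_zero t)

lemma ha' (a : ℂ) (ha : ∀ k : ℕ, poch (a / 2) k ≠ 0) (j : ℕ) :
    a / 2 + (j : ℂ) ≠ 0 := by
  intro h
  exact ha (j + 1) (by rw [poch_succ, h, mul_zero])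

lemma pTerm_zero (a b : ℂ) (m : ℕ) : pTerm a b m 0 = 1 / 2 := by
  rw [pTerm, if_pos (Nat.zero_le _)]
  simp only [pow_zero, Nat.factorial_zero, Nat.sub_zero, Nat.mul_zero,
    Nat.factorial_succ]
  rw [show poch b 0 = 1 by simp [poch], show poch (a/2) 0 = 1 by simp [poch]]
  push_cast
  have h1 : ((m:ℂ) + 1) ≠ 0 := Nat.cast_add_one_ne_zero m
  have h2 := fact_ne m
  field_simp

lemma gFun_zero (a b : ℂ) (n : ℕ) : gFun a b (n + 1) 0 = -b / 2 := by
  rw [gFun, if_pos (by omega)]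
  simp only [pow_zero, Nat.factorial_zero, Nat.mul_zero, Nat.sub_zero,
    Nat.add_sub_cancel, Nat.factorial_succ]
  rw [show poch b 1 = b by simp [poch], show poch (a/2) 0 = 1 by simp [poch]]
  push_cast
  have h1 : ((n:ℂ) + 1) ≠ 0 := Nat.cast_add_one_ne_zero n
  have h2 := fact_ne n
  field_simp


set_option maxHeartbeats 1600000 in
lemma keyA (A b J M S Q Fjm Fm Fj PA PB : ℂ)
    (hFm : Fm ≠ 0) (hFj : Fj ≠ 0) (hPA : PA ≠ 0) (hAJ : A + J ≠ 0)
    (hQ : Q ≠ 0) (hM1 : M + 1 ≠ 0) (hM2 : M + 2 ≠ 0) (hJ1 : J + 1 ≠ 0) :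
    2 * ((2*J+M+2) + (A+A)) *
      (S * (-1) / (2 * (Q*4)) * (((2*J+M+4)) * ((J+M+2)*((J+M+1)*Fjm))) /
        (((M+2)*((M+1)*Fm)) * ((J+1)*Fj)) * (PB / (PA*(A+J))))
    - (3 * (2*J+M+2) + 2 * (A+A)) *
      (S * (-1) / (2 * (Q*4)) * ((2*J+M+3) * ((J+M+1)*Fjm)) /
        (((M+1)*Fm) * ((J+1)*Fj)) * (PB / (PA*(A+J))))
    + ((2*J+M+2) + b) *
      (S * (-1) / (2 * (Q*4)) * ((2*J+M+2) * Fjm) /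
        (Fm * ((J+1)*Fj)) * (PB / (PA*(A+J))))
    = (-(2*J+M+2) * (S / (2 * Q)) * ((J+M+1)*Fjm) /
        (((M+2)*((M+1)*Fm)) * Fj) * (PB / PA))
      - (-(2*J+M+2) * (S * (-1) / (2 * (Q*4))) * Fjm /
        (Fm * ((J+1)*Fj)) * ((PB * (b + (J+1))) / (PA*(A+J)))) := by
  have h1 : 2 * ((2*J+M+2) + (A+A)) *
      (S * (-1) / (2 * (Q*4)) * (((2*J+M+4)) * ((J+M+2)*((J+M+1)*Fjm))) /
        (((M+2)*((M+1)*Fm)) * ((J+1)*Fj)) * (PB / (PA*(A+J))))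
      = (-2*(2*J+M+2+2*A)*(2*J+M+4)*(J+M+2)*(J+M+1)) *
        (S * Fjm * PB) / (2 * (Q*4) * ((M+2)*((M+1)*Fm)) * ((J+1)*Fj) * (PA*(A+J))) := by
    simp only [div_mul_eq_mul_div, mul_div_assoc', div_div]
    rw [div_eq_div_iff (by norm_num [mul_eq_zero, hFm, hFj, hPA, hAJ, hQ, hM1, hM2, hJ1])
      (by norm_num [mul_eq_zero, hFm, hFj, hPA, hAJ, hQ, hM1, hM2, hJ1])]
    ring
  have h2 : (3 * (2*J+M+2) + 2 * (A+A)) *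
      (S * (-1) / (2 * (Q*4)) * ((2*J+M+3) * ((J+M+1)*Fjm)) /
        (((M+1)*Fm) * ((J+1)*Fj)) * (PB / (PA*(A+J))))
      = (-(3*(2*J+M+2)+4*A)*(2*J+M+3)*(J+M+1)*(M+2)) *
        (S * Fjm * PB) / (2 * (Q*4) * ((M+2)*((M+1)*Fm)) * ((J+1)*Fj) * (PA*(A+J))) := by
    simp only [div_mul_eq_mul_div, mul_div_assoc', div_div]
    rw [div_eq_div_iff (by norm_num [mul_eq_zero, hFm, hFj, hPA, hAJ, hQ, hM1, hM2, hJ1])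
      (by norm_num [mul_eq_zero, hFm, hFj, hPA, hAJ, hQ, hM1, hM2, hJ1])]
    ring
  have h3 : ((2*J+M+2) + b) *
      (S * (-1) / (2 * (Q*4)) * ((2*J+M+2) * Fjm) /
        (Fm * ((J+1)*Fj)) * (PB / (PA*(A+J))))
      = (-(2*J+M+2+b)*(2*J+M+2)*(M+2)*(M+1)) *
        (S * Fjm * PB) / (2 * (Q*4) * ((M+2)*((M+1)*Fm)) * ((J+1)*Fj) * (PA*(A+J))) := by
    simp only [div_mul_eq_mul_div, mul_div_assoc', div_div]
    rw [div_eq_div_iff (by norm_num [mul_eq_zero, hFm, hFj, hPA, hAJ, hQ, hM1, hM2, hJ1])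
      (by norm_num [mul_eq_zero, hFm, hFj, hPA, hAJ, hQ, hM1, hM2, hJ1])]
    ring
  have h4 : (-(2*J+M+2) * (S / (2 * Q)) * ((J+M+1)*Fjm) /
        (((M+2)*((M+1)*Fm)) * Fj) * (PB / PA))
      = (-(2*J+M+2)*(J+M+1)*4*(J+1)*(A+J)) *
        (S * Fjm * PB) / (2 * (Q*4) * ((M+2)*((M+1)*Fm)) * ((J+1)*Fj) * (PA*(A+J))) := by
    simp only [div_mul_eq_mul_div, mul_div_assoc', div_div]
    rw [div_eq_div_iff (by norm_num [mul_eq_zero, hFm, hFj, hPA, hAJ, hQ, hM1, hM2, hJ1])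
      (by norm_num [mul_eq_zero, hFm, hFj, hPA, hAJ, hQ, hM1, hM2, hJ1])]
    ring
  have h5 : (-(2*J+M+2) * (S * (-1) / (2 * (Q*4))) * Fjm /
        (Fm * ((J+1)*Fj)) * ((PB * (b + (J+1))) / (PA*(A+J))))
      = ((2*J+M+2)*(b+J+1)*(M+1)*(M+2)) *
        (S * Fjm * PB) / (2 * (Q*4) * ((M+2)*((M+1)*Fm)) * ((J+1)*Fj) * (PA*(A+J))) := by
    simp only [div_mul_eq_mul_div, mul_div_assoc', div_div]
    rw [div_eq_div_iff (by norm_num [mul_eq_zero, hFm, hFj, hPA, hAJ, hQ, hM1, hM2, hJ1])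
      (by norm_num [mul_eq_zero, hFm, hFj, hPA, hAJ, hQ, hM1, hM2, hJ1])]
    ring
  rw [h1, h2, h3, h4, h5]
  rw [div_sub_div_same, ← add_div, div_sub_div_same]
  congr 1
  ring

set_option maxHeartbeats 800000 in
lemma keyB (A b J S Q Fj PA PB : ℂ)
    (hFj : Fj ≠ 0) (hPA : PA ≠ 0) (hAJ : A + J ≠ 0)
    (hQ : Q ≠ 0) (hJ1 : J + 1 ≠ 0) :
    2 * ((2*J+1) + (A+A)) *
      (S * (-1) / (2 * (Q*4)) * ((2*J+3) * ((J+1)*Fj)) /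
        (1 * ((J+1)*Fj)) * (PB / (PA*(A+J))))
    - (3 * (2*J+1) + 2 * (A+A)) *
      (S * (-1) / (2 * (Q*4)) * ((2*J+2) * Fj) /
        (1 * ((J+1)*Fj)) * (PB / (PA*(A+J))))
    = -(2*J+1) * (S / (2 * Q)) * Fj / (1 * Fj) * (PB / PA) := by
  simp only [div_mul_eq_mul_div, mul_div_assoc', div_div]
  rw [div_sub_div_same, div_eq_div_iff (by norm_num [mul_eq_zero, hFj, hPA, hAJ, hQ, hJ1])
    (by norm_num [mul_eq_zero, hFj, hPA, hAJ, hQ, hJ1])]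
  ring

set_option maxHeartbeats 800000 in
lemma keyC (A b I S Q Fi PA PB2 : ℂ)
    (hFi : Fi ≠ 0) (hPA : PA ≠ 0) (hAI : A + I ≠ 0) (hAI1 : A + (I+1) ≠ 0)
    (hQ : Q ≠ 0) (hI1 : I + 1 ≠ 0) (hI2 : I + 1 + 1 ≠ 0) :
    2 * ((2*I+2) + (A+A)) *
      (S * (-1) * (-1) / (2 * (Q*4*4)) * ((2*I+4) * ((I+1)*Fi)) /
        (1 * ((I+1+1)*((I+1)*Fi))) * (PB2 / (PA*(A+I)*(A+(I+1)))))
    = -(2*I+2) * (S * (-1) / (2 * (Q*4))) * Fi /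
        (1 * ((I+1)*Fi)) * (PB2 / (PA*(A+I))) := by
  simp only [div_mul_eq_mul_div, mul_div_assoc', div_div]
  rw [div_eq_div_iff (by norm_num [mul_eq_zero, hFi, hPA, hAI, hAI1, hQ, hI1, hI2])
    (by norm_num [mul_eq_zero, hFi, hPA, hAI, hAI1, hQ, hI1, hI2])]
  ring

set_option maxHeartbeats 1600000 in
/-- The termwise (Zeilberger certificate) identity. -/
lemma step (a b : ℂ) (ha : ∀ k : ℕ, poch (a / 2) k ≠ 0) (n k : ℕ) :
    2 * ((n : ℂ) + 1 + a) * pTerm a b (n + 2) k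
      - (3 * ((n : ℂ) + 1) + 2 * a) * pTerm a b (n + 1) k
      + ((n : ℂ) + 1 + b) * pTerm a b n k
    = GG a b (n + 1) k - GG a b (n + 1) (k + 1) := by
  obtain ⟨A, rfl⟩ : ∃ A, a = A + A := ⟨a / 2, by ring⟩
  simp only [show (A + A) / 2 = A from by ring] at ha
  match k with
  | 0 =>
    rw [pTerm_zero, pTerm_zero, pTerm_zero]
    show _ = 0 - gFun (A + A) b (n + 1) 0
    rw [gFun_zero]
    push_cast
    ring
  | (j + 1) =>
    rcases le_or_gt (2 * (j + 1)) (n + 1) with hA | hBCD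
    · -- Case A : 2(j+1) ≤ n+1
      obtain ⟨m, rfl⟩ : ∃ m, n = 2 * j + m + 1 := ⟨n - 2*j - 1, by omega⟩
      have h2 : j + 1 ≤ (2*j+m+1 + 2 + 1) / 2 := by omega
      have h1 : j + 1 ≤ (2*j+m+1 + 1 + 1) / 2 := by omega
      have h0 : j + 1 ≤ (2*j+m+1 + 1) / 2 := by omega
      have hg0 : 2 * j ≤ 2*j+m+1 + 1 := by omega
      have hg1 : 2 * (j+1) ≤ 2*j+m+1 + 1 := by omega
      simp only [pTerm, GG, gFun, if_pos h2, if_pos h1, if_pos h0, if_pos hg0,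
        if_pos hg1, show (A + A) / 2 = A from by ring]
      have hf : Nat.factorial (2*j+m+1 - 2*(j+1) + 1) = Nat.factorial m := by
        cases m with
        | zero => rw [show 2*j+0+1 - 2*(j+1) + 1 = 1 by omega]; rfl
        | succ m' => congr 1; omega
      rw [hf,
          show 2*j+m+1 + 2 - (j+1) = (j+m+1)+1 by omega,
          show 2*j+m+1 + 2 - 2*(j+1) + 1 = (m+1)+1 by omega,
          show 2*j+m+1 + 1 - (j+1) = (j+m)+1 by omega,
          show 2*j+m+1 + 1 - 2*(j+1) + 1 = m+1 by omega,
          show 2*j+m+1 - (j+1) = j+m by omega,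
          show 2*j+m+1 + 1 - 1 - j = (j+m)+1 by omega,
          show 2*j+m+1 + 1 - 2*j = (m+1)+1 by omega,
          show 2*j+m+1 + 1 - 1 - (j+1) = j+m by omega,
          show 2*j+m+1 + 1 - 2*(j+1) = m by omega]
      rw [poch_succ b (j+1), poch_succ A j]
      simp only [Nat.factorial_succ, pow_succ]
      have e1 := fact_ne (j+m)
      have e2 := fact_ne m
      have e3 := fact_ne j
      have e4 := ha j
      have e5 : A + (j:ℂ) ≠ 0 := fun h => ha (j+1) (by rw [poch_succ, h, mul_zero])
      have e6 : ((4:ℂ))^j ≠ 0 := pow_ne_zero _ (by norm_num)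
      have c1 : ((m:ℂ) + 1) ≠ 0 := Nat.cast_add_one_ne_zero m
      have c2 : ((m:ℂ) + 1 + 1) ≠ 0 := by
        have h := Nat.cast_add_one_ne_zero (m + 1) (R := ℂ); push_cast at h
        exact h
      have c3 : ((j:ℂ) + 1) ≠ 0 := Nat.cast_add_one_ne_zero j
      have c4 : ((j:ℂ) + (m:ℂ) + 1) ≠ 0 := by
        have h := Nat.cast_add_one_ne_zero (j + m) (R := ℂ); push_cast at h
        exact h
      have cM2 : ((m:ℂ) + 2) ≠ 0 := fun h => c2 (by linear_combination h)
      push_cast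
      linear_combination keyA A b (j:ℂ) (m:ℂ) ((-1:ℂ)^j) ((4:ℂ)^j)
        ((Nat.factorial (j+m) : ℂ)) ((Nat.factorial m : ℂ)) ((Nat.factorial j : ℂ))
        (poch A j) (poch b (j+1)) e2 e3 e4 e5 e6 c1 cM2 c3
    · rcases le_or_gt (2 * (j + 1)) (n + 2) with hB | hCD
      · -- Case B : 2(j+1) = n+2, n = 2j
        obtain rfl : n = 2 * j := by omega
        have h2 : j + 1 ≤ (2*j + 2 + 1) / 2 := by omega
        have h1 : j + 1 ≤ (2*j + 1 + 1) / 2 := by omega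
        have h0 : ¬ (j + 1 ≤ (2*j + 1) / 2) := by omega
        have hg0 : 2 * j ≤ 2*j + 1 := by omega
        have hg1 : ¬ (2 * (j+1) ≤ 2*j + 1) := by omega
        simp only [pTerm, GG, gFun, if_pos h2, if_pos h1, if_neg h0, if_pos hg0,
          if_neg hg1, show (A + A) / 2 = A from by ring]
        rw [show 2*j + 2 - (j+1) = j+1 by omega,
            show 2*j + 2 - 2*(j+1) + 1 = 1 by omega,
            show 2*j + 1 - (j+1) = j by omega,
            show 2*j + 1 - 2*(j+1) + 1 = 1 by omega,
            show 2*j + 1 - 1 - j = j by omega,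
            show 2*j + 1 - 2*j = 1 by omega]
        rw [poch_succ A j]
        simp only [Nat.factorial_succ, Nat.factorial_one, Nat.factorial_zero, pow_succ]
        have e3 := fact_ne j
        have e4 := ha j
        have e5 : A + (j:ℂ) ≠ 0 := fun h => ha (j+1) (by rw [poch_succ, h, mul_zero])
        have e6 : ((4:ℂ))^j ≠ 0 := pow_ne_zero _ (by norm_num)
        have c3 : ((j:ℂ) + 1) ≠ 0 := Nat.cast_add_one_ne_zero j
        push_cast
        linear_combination keyB A b (j:ℂ) ((-1:ℂ)^j) ((4:ℂ)^j)
          ((Nat.factorial j : ℂ)) (poch A j) (poch b (j+1)) e3 e4 e5 e6 c3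
      · rcases le_or_gt (2 * (j + 1)) (n + 3) with hC | hD
        · -- Case C : 2(j+1) = n+3, n = 2i+1 with j = i+1
          obtain ⟨i, rfl, rfl⟩ : ∃ i, n = 2 * i + 1 ∧ j = i + 1 :=
            ⟨j - 1, by omega, by omega⟩
          have h2 : i + 1 + 1 ≤ (2*i+1 + 2 + 1) / 2 := by omega
          have h1 : ¬ (i + 1 + 1 ≤ (2*i+1 + 1 + 1) / 2) := by omega
          have h0 : ¬ (i + 1 + 1 ≤ (2*i+1 + 1) / 2) := by omega
          have hg0 : 2 * (i+1) ≤ 2*i+1 + 1 := by omega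
          have hg1 : ¬ (2 * (i+1+1) ≤ 2*i+1 + 1) := by omega
          simp only [pTerm, GG, gFun, if_pos h2, if_neg h1, if_neg h0,
            if_pos hg0, if_neg hg1, show (A + A) / 2 = A from by ring]
          rw [show 2*i+1 + 2 - (i+1+1) = i+1 by omega,
              show 2*i+1 + 2 - 2*(i+1+1) + 1 = 1 by omega,
              show 2*i+1 + 1 - 1 - (i+1) = i by omega,
              show 2*i+1 + 1 - 2*(i+1) = 0 by omega]
          rw [poch_succ A (i+1), poch_succ A i]
          simp only [Nat.factorial_succ, Nat.factorial_one, Nat.factorial_zero, pow_succ]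
          have e3 := fact_ne i
          have e4 := ha i
          have e5 : A + (i:ℂ) ≠ 0 := fun h => ha (i+1) (by rw [poch_succ, h, mul_zero])
          have e5' : A + ((i:ℂ) + 1) ≠ 0 := by
            intro h
            apply ha (i+2)
            rw [poch_succ, poch_succ]
            push_cast
            rw [h, mul_zero]
          have e6 : ((4:ℂ))^i ≠ 0 := pow_ne_zero _ (by norm_num)
          have c3 : ((i:ℂ) + 1) ≠ 0 := Nat.cast_add_one_ne_zero i
          have c4 : ((i:ℂ) + 1 + 1) ≠ 0 := by
            have h := Nat.cast_add_one_ne_zero (i + 1) (R := ℂ); push_cast at h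
            exact h
          push_cast
          linear_combination keyC A b (i:ℂ) ((-1:ℂ)^i) ((4:ℂ)^i)
            ((Nat.factorial i : ℂ)) (poch A i) (poch b (i+1+1))
            e3 e4 e5 e5' e6 c3 c4
        · -- Case D : everything vanishes
          have h2 : ¬ (j + 1 ≤ (n + 2 + 1) / 2) := by omega
          have h1 : ¬ (j + 1 ≤ (n + 1 + 1) / 2) := by omega
          have h0 : ¬ (j + 1 ≤ (n + 1) / 2) := by omega
          have hg0 : ¬ (2 * j ≤ n + 1) := by omega
          have hg1 : ¬ (2 * (j+1) ≤ n + 1) := by omega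
          simp only [pTerm, GG, gFun, if_neg h2, if_neg h1, if_neg h0,
            if_neg hg0, if_neg hg1]
          ring

lemma Pfun_eq_sum (a b : ℂ) (m N : ℕ) (h : (m + 1) / 2 + 1 ≤ N) :
    Pfun a b m = ∑ k ∈ Finset.range N, pTerm a b m k := by
  rw [Pfun]
  apply Finset.sum_subset (Finset.range_subset_range.2 h)
  intro x hx hnx
  rw [Finset.mem_range] at hx hnx
  rw [pTerm, if_neg (by omega)]

/-- `P(n)` satisfies the second order recurrence. -/
theorem P_recurrence (a b : ℂ) (ha : ∀ k : ℕ, poch (a / 2) k ≠ 0)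
    (n : ℕ) (hn : 1 ≤ n) :
    2 * ((n : ℂ) + a) * Pfun a b (n + 1) - (3 * (n : ℂ) + 2 * a) * Pfun a b n
      + ((n : ℂ) + b) * Pfun a b (n - 1) = 0 := by
  obtain ⟨m, rfl⟩ : ∃ m, n = m + 1 := ⟨n - 1, by omega⟩
  rw [show m + 1 - 1 = m from rfl]
  rw [Pfun_eq_sum a b (m + 1 + 1) ((m + 3 + 1) / 2 + 1) (by omega),
      Pfun_eq_sum a b (m + 1) ((m + 3 + 1) / 2 + 1) (by omega),
      Pfun_eq_sum a b m ((m + 3 + 1) / 2 + 1) (by omega)]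
  rw [Finset.mul_sum, Finset.mul_sum, Finset.mul_sum,
      ← Finset.sum_sub_distrib, ← Finset.sum_add_distrib]
  have hstep : ∀ k ∈ Finset.range ((m + 3 + 1) / 2 + 1),
      2 * (((m + 1 : ℕ) : ℂ) + a) * pTerm a b (m + 1 + 1) k
        - (3 * ((m + 1 : ℕ) : ℂ) + 2 * a) * pTerm a b (m + 1) k
        + (((m + 1 : ℕ) : ℂ) + b) * pTerm a b m k
      = GG a b (m + 1) k - GG a b (m + 1) (k + 1) := by
    intro k _
    have h := step a b ha m k
    push_cast at h ⊢
    linear_combination h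
  rw [Finset.sum_congr rfl hstep, Finset.sum_range_sub']
  show GG a b (m + 1) 0 - gFun a b (m + 1) ((m + 3 + 1) / 2) = 0
  rw [show GG a b (m + 1) 0 = 0 from rfl, gFun, if_neg (by omega)]
  ring
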